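/- arXiv:1910.11728 — 2 statements merged into one kernel-verified Lean document; each statement's English description precedes it below -/
import Mathlib

section
/- Poincaré's theorem: a minimal orientation-preserving homeomorphism f of the circle is topologically conjugate to the rigid rotation ρ_α : e^{2πix} ↦ e^{2πi(x+α)}, where α is the rotation number of f (which is irrational). -/
open Filter

/-- The universal covering map `π : ℝ → S¹`, `π x = e^{2πix}`. -/
noncomputable def coverMap : ℝ → Circle := fun x => Circle.exp (2 * Real.pi * x)

/-!
The lift `F` satisfies `F (x + 1) = F x + 1`, so it has a translation number `τ`. If `τ = p / q`
then `F^q x = x + p` for some `x`, and the orbit of `π x` is finite, hence not dense. For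
irrational `τ`, Ghys' semiconjugacy theorem gives a monotone degree-one `H` with
`H ∘ F = τ + H`. The range of `H` is invariant under translation by `1` and `τ`, hence dense,
so `H` is continuous and surjective; minimality rules out plateaus of `H`, so `H` is a
homeomorphism of `ℝ` and descends to the conjugacy on the circle.
-/

open Function Set Topology Pointwise

section fullOrbit

variable {α β : Type*}

def fullOrbit (e : α ≃ α) (a : α) : Set α := {b | ∃ n : ℕ, b = e^[n] a ∨ b = e.symm^[n] a}

theorem Function.Semiconj.image_fullOrbit {p : β → α} {E : β ≃ β} {e : α ≃ α}
    (h : Semiconj p E e) (b : β) : p '' fullOrbit E b = fullOrbit e (p b) := by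
  have h' : Semiconj p E.symm e.symm := h.inverses_right E.right_inv e.left_inv
  ext w
  constructor
  · rintro ⟨_, ⟨n, rfl | rfl⟩, rfl⟩
    exacts [⟨n, .inl (h.iterate_right n b)⟩, ⟨n, .inr (h'.iterate_right n b)⟩]
  · rintro ⟨n, rfl | rfl⟩
    exacts [⟨_, ⟨n, .inl rfl⟩, h.iterate_right n b⟩, ⟨_, ⟨n, .inr rfl⟩, h'.iterate_right n b⟩]

theorem fullOrbit_addLeft {G : Type*} [AddGroup G] (t c : G) :
    fullOrbit (Equiv.addLeft t) c = {w | ∃ j : ℤ, w = j • t + c} := by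
  ext w
  simp only [fullOrbit, Equiv.addLeft_symm, Equiv.coe_addLeft, add_left_iterate]
  constructor
  · rintro ⟨n, rfl | rfl⟩
    exacts [⟨n, by simp⟩, ⟨-n, by simp⟩]
  · rintro ⟨j, rfl⟩
    obtain ⟨n, rfl | rfl⟩ := Int.eq_nat_or_neg j
    exacts [⟨n, .inl (by simp)⟩, ⟨n, .inr (by simp)⟩]

theorem Function.IsPeriodicPt.finite_fullOrbit {e : α ≃ α} {n : ℕ} {a : α}
    (ha : IsPeriodicPt e n a) (hn : 0 < n) : (fullOrbit e a).Finite := by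
  refine ((finite_Iio n).image fun k => e^[k] a).subset ?_
  have hforward (k : ℕ) : e^[k] a ∈ (fun k => e^[k] a) '' Iio n :=
    ⟨k % n, Nat.mod_lt k hn, ha.iterate_mod_apply k⟩
  rintro _ ⟨k, rfl | rfl⟩
  · exact hforward k
  · have hk : e^[k] (e^[k * (n - 1)] a) = a := by
      rw [← iterate_add_apply, add_comm, ← Nat.mul_add_one, Nat.sub_add_cancel hn, mul_comm]
      exact (ha.mul_const k).eq
    have hsymm : e.symm^[k] a = e^[k * (n - 1)] a := by
      conv_lhs => rw [← hk]
      exact (e.leftInverse_symm.iterate k) _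
    rw [hsymm]
    exact hforward _

end fullOrbit

theorem AddAction.mem_stabilizer_range_of_semiconj {M α β : Type*} [AddGroup M] [AddAction M α]
    {t : M} {H : β → α} {G : β → β} (hG : Surjective G) (h : Semiconj H G (t +ᵥ ·)) :
    t ∈ AddAction.stabilizer M (range H) := by
  refine AddAction.mem_stabilizer_set.2 fun y => ⟨?_, ?_⟩
  · rintro ⟨x, hx⟩
    obtain ⟨x, rfl⟩ := hG x
    exact ⟨x, vadd_left_cancel t ((h x).symm.trans hx)⟩
  · rintro ⟨x, rfl⟩
    exact ⟨G x, h x⟩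

theorem coverMap_add (x y : ℝ) : coverMap (x + y) = coverMap x * coverMap y := by
  simp only [coverMap, mul_add, Circle.exp_add]

theorem coverMap_eq_coverMap_iff {x y : ℝ} : coverMap x = coverMap y ↔ ∃ m : ℤ, x = y + m := by
  simp only [coverMap, Circle.exp_eq_exp]
  refine exists_congr fun m => ⟨fun h => ?_, fun h => by rw [h]; ring⟩
  have hπ : 2 * Real.pi ≠ 0 := by positivity
  exact mul_left_cancel₀ hπ (by rw [h]; ring)

theorem coverMap_add_int (x : ℝ) (m : ℤ) : coverMap (x + m) = coverMap x :=
  coverMap_eq_coverMap_iff.2 ⟨m, rfl⟩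

theorem continuous_coverMap : Continuous coverMap := by
  unfold coverMap; fun_prop

theorem surjective_coverMap : Surjective coverMap := fun z =>
  ⟨Complex.arg z / (2 * Real.pi), by
    rw [coverMap, mul_div_cancel₀ _ (by positivity)]; exact Circle.exp_arg z⟩

theorem isOpenMap_coverMap : IsOpenMap coverMap :=
  isLocalHomeomorph_circleExp.isOpenMap.comp
    (Homeomorph.mulLeft₀ (2 * Real.pi) (by positivity)).isOpenMap

theorem isQuotientMap_coverMap : IsQuotientMap coverMap :=
  isOpenMap_coverMap.isQuotientMap continuous_coverMap surjective_coverMap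

theorem injOn_coverMap_Ico (x : ℝ) : InjOn coverMap (Ico x (x + 1)) := by
  intro a ha b hb hab
  obtain ⟨m, rfl⟩ := coverMap_eq_coverMap_iff.1 hab
  obtain rfl : m = 0 := by
    rw [← Int.abs_lt_one_iff, ← Int.cast_lt (R := ℝ), Int.cast_abs, Int.cast_one, abs_lt]
    constructor <;> linarith [ha.1, ha.2, hb.1, hb.2]
  simp

instance : Infinite Circle :=
  infinite_univ_iff.1 <| ((Ico_infinite (lt_add_one 0)).image (injOn_coverMap_Ico 0)).mono
    (subset_univ _)

theorem map_add_one_of_semiconj_coverMap {F : ℝ → ℝ} {f : Circle → Circle} (hF : StrictMono F)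
    (hFc : Continuous F) (hf : Injective f) (h : Semiconj coverMap F f) (x : ℝ) :
    F (x + 1) = F x + 1 := by
  obtain ⟨n, hn⟩ : ∃ n : ℤ, F (x + 1) = F x + n := by
    rw [← coverMap_eq_coverMap_iff, h, h]
    exact congrArg f (by exact_mod_cast coverMap_add_int x 1)
  have hpos : 0 < n := by
    have := hF (lt_add_one x)
    rw [hn] at this
    exact_mod_cast (lt_add_iff_pos_right _).1 this
  rcases (Int.add_one_le_iff.2 hpos).eq_or_lt with hn1 | hn2
  · simp [hn, ← hn1]
  -- for `n ≥ 2`, `F` takes the value `F x + 1` inside `(x, x + 1)`, against injectivity of `f`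
  obtain ⟨y, hy, hFy⟩ := intermediate_value_Ioo (lt_add_one x).le hFc.continuousOn
    (show F x + 1 ∈ Ioo (F x) (F (x + 1)) from ⟨by linarith, by
      rw [hn]; have : (2 : ℝ) ≤ n := by exact_mod_cast hn2
      linarith⟩)
  have : coverMap y = coverMap x := hf <| by rw [← h, ← h, hFy, ← Int.cast_one, coverMap_add_int]
  exact absurd (injOn_coverMap_Ico x ⟨hy.1.le, hy.2⟩ ⟨le_rfl, lt_add_one x⟩ this) hy.1.ne'

namespace CircleDeg1Lift

theorem irrational_translationNumber_of_dense_fullOrbit (F : CircleDeg1Lift) (hFc : Continuous F)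
    {f : Circle ≃ Circle} (hF : Semiconj coverMap F f) (hmin : ∀ z, Dense (fullOrbit f z)) :
    Irrational F.translationNumber := by
  rintro ⟨q, hq⟩
  obtain ⟨x, hx⟩ := (F.translationNumber_eq_rat_iff hFc q.pos).1 (by rw [← hq, Rat.cast_def])
  have hper : IsPeriodicPt f q.den (coverMap x) := by
    rw [IsPeriodicPt, IsFixedPt, ← hF.iterate_right, ← coe_pow, hx, coverMap_add_int]
  have hfin := hper.finite_fullOrbit q.pos
  have huniv : fullOrbit f (coverMap x) = univ := by
    rw [← hfin.isClosed.closure_eq, (hmin _).closure_eq]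
  exact infinite_univ (huniv ▸ hfin)

theorem denseRange_of_semiconj_irrational (H : CircleDeg1Lift) {F : ℝ → ℝ} {τ : ℝ}
    (hF : Surjective F) (hH : Semiconj H F (τ + ·)) (hτ : Irrational τ) : DenseRange H := by
  have hsub : AddSubgroup.closure {τ, 1} ≤ AddAction.stabilizer ℝ (range H) := by
    rw [AddSubgroup.closure_le, pair_subset_iff]
    exact ⟨AddAction.mem_stabilizer_range_of_semiconj hF hH,
      AddAction.mem_stabilizer_range_of_semiconj (add_left_surjective 1) H.map_one_add⟩
  have hdense : Dense (AddSubgroup.closure {τ, 1} : Set ℝ) :=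
    dense_addSubgroupClosure_pair_iff.2 (by rwa [div_one])
  refine ((Homeomorph.addRight (H 0)).isDenseEmbedding.dense_image.2 hdense).mono ?_
  rintro _ ⟨s, hs, rfl⟩
  exact (AddAction.mem_stabilizer_set.1 (hsub hs) (H 0)).2 (mem_range_self 0)

/-- If `H` is constant `= c` on `(a, b)`, a point with `H`-value `c + τ / 2` has an orbit that
never enters `(a, b) + ℤ`, since `(2j + 1) τ` is never an integer. -/
theorem injective_of_semiconj_of_dense_fullOrbit (H : CircleDeg1Lift) (hHs : Surjective H)
    {F : ℝ ≃ ℝ} {τ : ℝ} (hH : Semiconj H F (τ + ·)) (hτ : Irrational τ) {f : Circle ≃ Circle}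
    (hF : Semiconj coverMap F f) (hmin : ∀ z, Dense (fullOrbit f z)) : Injective H := by
  intro a b hab
  by_contra hne
  wlog hlt : a < b generalizing a b
  · exact this hab.symm (Ne.symm hne) ((Ne.lt_or_gt hne).resolve_left hlt)
  have hplateau : ∀ t ∈ Ioo a b, H t = H a := fun t ht =>
    le_antisymm (hab ▸ H.mono ht.2.le) (H.mono ht.1.le)
  obtain ⟨x₀, hx₀⟩ := hHs (H a + τ / 2)
  obtain ⟨_, ⟨t, ht, rfl⟩, hmem⟩ := (hmin (coverMap x₀)).inter_open_nonempty _
    (isOpenMap_coverMap _ isOpen_Ioo) ((nonempty_Ioo.2 hlt).image _)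
  rw [← hF.image_fullOrbit] at hmem
  obtain ⟨y, hy, hyt⟩ := hmem
  obtain ⟨m, rfl⟩ := coverMap_eq_coverMap_iff.1 hyt
  have hHy : H (t + m) ∈ fullOrbit (Equiv.addLeft τ) (H x₀) :=
    (show Semiconj H F (Equiv.addLeft τ) from hH).image_fullOrbit x₀ ▸ mem_image_of_mem H hy
  rw [fullOrbit_addLeft] at hHy
  obtain ⟨j, hj⟩ := hHy
  rw [map_add_int, hplateau t ht, hx₀, zsmul_eq_mul] at hj
  have : ((2 * j + 1 : ℤ) : ℝ) * τ = (2 * m : ℤ) := by push_cast; linarith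
  exact (hτ.intCast_mul (by omega)).ne_int _ this

theorem exists_homeomorph_semiconj_coverMap (G : CircleDeg1Lift) (hc : Continuous G)
    (hb : Bijective G) : ∃ g : Circle ≃ₜ Circle, Semiconj coverMap G g := by
  have hfac : FactorsThrough (coverMap ∘ G) coverMap := fun a b hab => by
    obtain ⟨m, rfl⟩ := coverMap_eq_coverMap_iff.1 hab
    simp only [comp_apply, map_add_int, coverMap_add_int]
  let π : C(ℝ, Circle) := ⟨coverMap, continuous_coverMap⟩
  let πG : C(ℝ, Circle) := ⟨coverMap ∘ G, continuous_coverMap.comp hc⟩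
  let g := isQuotientMap_coverMap.lift (f := π) πG hfac
  have hg : Semiconj coverMap G g := fun x =>
    (DFunLike.congr_fun (isQuotientMap_coverMap.lift_comp (f := π) πG hfac) x).symm
  have hinj : Injective g := by
    intro u v huv
    obtain ⟨a, rfl⟩ := surjective_coverMap u
    obtain ⟨b, rfl⟩ := surjective_coverMap v
    rw [← hg, ← hg, coverMap_eq_coverMap_iff] at huv
    obtain ⟨m, hm⟩ := huv
    rw [← map_add_int] at hm
    rw [hb.injective hm, coverMap_add_int]
  have hsurj : Surjective g := fun u => by
    obtain ⟨x, rfl⟩ := (surjective_coverMap.comp hb.surjective) u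
    exact ⟨coverMap x, (hg x).symm⟩
  exact ⟨(g.continuous.homeoOfEquivCompactToT2 (f := Equiv.ofBijective g ⟨hinj, hsurj⟩)), hg⟩

end CircleDeg1Lift

/-- Poincaré's classification theorem: a minimal orientation-preserving circle
homeomorphism `f` has irrational rotation number `τ` and is topologically conjugate to
the rigid rotation by `e^{2πiτ}`. -/
theorem poincare_classification (f : Circle ≃ₜ Circle)
    (hmin : ∀ z : Circle,
      Dense {w : Circle | ∃ n : ℕ, w = (⇑f)^[n] z ∨ w = (⇑f.symm)^[n] z})
    (F : ℝ ≃ₜ ℝ) (hFm : StrictMono F)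
    (hFlift : ∀ x : ℝ, coverMap (F x) = f (coverMap x))
    (τ : ℝ) (hτ : Tendsto (fun n : ℕ => ((⇑F)^[n] 0) / (n : ℝ)) atTop (nhds τ)) :
    Irrational τ ∧
      ∃ h : Circle ≃ₜ Circle, ∀ z : Circle,
        h (f z) = Circle.exp (2 * Real.pi * τ) * h z := by
  have hdense : ∀ z, Dense (fullOrbit f.toEquiv z) := hmin
  let Fℓ : CircleDeg1Lift :=
    ⟨⟨F, hFm.monotone⟩, map_add_one_of_semiconj_coverMap hFm F.continuous f.injective hFlift⟩
  have hFτ : Fℓ.translationNumber = τ := Fℓ.translationNumber_eq_of_tendsto₀ hτ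
  have hirr : Irrational τ :=
    hFτ ▸ Fℓ.irrational_translationNumber_of_dense_fullOrbit F.continuous hFlift hdense
  obtain ⟨H, hH⟩ := CircleDeg1Lift.semiconj_of_bijective_of_translationNumber_eq
    (f₁ := Fℓ) (f₂ := CircleDeg1Lift.translate (.ofAdd τ)) F.bijective
    (CircleDeg1Lift.isUnit_iff_bijective.1 (Units.isUnit _))
    (by rw [CircleDeg1Lift.translationNumber_translate, hFτ])
  have hHτ : Semiconj H F (τ + ·) := fun x => (hH x).trans (CircleDeg1Lift.translate_apply τ _)
  have hHs : Surjective H := H.continuous_iff_surjective.1 <|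
    H.monotone.continuous_of_denseRange (H.denseRange_of_semiconj_irrational F.surjective hHτ hirr)
  have hHi : Injective H :=
    H.injective_of_semiconj_of_dense_fullOrbit hHs (F := F.toEquiv) hHτ hirr hFlift hdense
  obtain ⟨h, hh⟩ := H.exists_homeomorph_semiconj_coverMap
    (H.continuous_iff_surjective.2 hHs) ⟨hHi, hHs⟩
  refine ⟨hirr, h, fun z => ?_⟩
  obtain ⟨x, rfl⟩ := surjective_coverMap z
  rw [← hFlift, ← hh, ← hh, hHτ, coverMap_add]
  rfl
end

section
/- Dichotomy theorem (Shi–Zhou): for a countable group G, either G admits a topologically transitive action on ℝ by orientation-preserving homeomorphisms, or every action of G on ℝ by orientation-preserving homeomorphisms has a wandering interval. -/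
/-!
If some action has no wandering interval, we find a point `y` moved by `G` whose orbit has no
gaps, i.e. is densely ordered. Such an orbit is order-isomorphic to `ℚ`; transporting the action
along this isomorphism and extending each order automorphism of `ℚ` to `ℝ` gives an action with
a dense orbit.

To find `y`, suppose that the orbit of every point not fixed by `G` has a gap. An open interval `S`
that is a block (each `g` stabilises `S` or moves it off itself) contains, since it is not
wandering, a point moved by the stabiliser of `S`; a gap of that stabiliser-orbit is a block whose
closure is a compact subset of `S`. Iterating transfinitely, with interiors of intersections at
limit stages, gives a strictly decreasing family of subsets of `ℝ` indexed by all ordinals, which is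
absurd. The limit stages are where the gaps are used: if the interior of the intersection were
empty, the nested compact closures would shrink to a point `p` which is moved inside each of them,
so the orbit of `p` would accumulate at `p`, whereas a gap in the orbit of `p` can be translated to
start and to end at `p`.
-/

open Set MulAction Pointwise

section OrderedAction

variable {G α : Type*} [Group G] [LinearOrder α] [MulAction G α]

structure IsGap (O : Set α) (u v : α) : Prop where
  left_mem : u ∈ O
  right_mem : v ∈ O
  lt : u < v
  disjoint : Disjoint (Ioo u v) O

lemma exists_isGap_of_not_denselyOrdered {O : Set α} (h : ¬ DenselyOrdered O) :
    ∃ u v, IsGap O u v := by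
  by_contra! hO
  refine h ⟨fun a b hab => ?_⟩
  obtain ⟨c, hc, hcO⟩ := not_disjoint_iff.mp
    fun hd => hO a b ⟨a.2, b.2, hab, hd⟩
  exact ⟨⟨c, hcO⟩, hc.1, hc.2⟩

lemma IsGap.mono {O O' : Set α} {u v : α} (h : IsGap O u v) (hO : O' ⊆ O) (hu : u ∈ O')
    (hv : v ∈ O') : IsGap O' u v :=
  ⟨hu, hv, h.lt, h.disjoint.mono_right hO⟩

lemma IsGap.eq_of_not_disjoint {O : Set α} {u v u' v' : α} (h : IsGap O u v)
    (h' : IsGap O u' v') (hmeet : ¬ Disjoint (Ioo u v) (Ioo u' v')) : u = u' ∧ v = v' := by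
  obtain ⟨x, ⟨hux, hxv⟩, hux', hxv'⟩ := not_disjoint_iff.mp hmeet
  have hl : ∀ {a b c : α}, IsGap O a b → c ∈ O → a < c → c < b → False :=
    fun hg hc hac hcb => disjoint_right.mp hg.disjoint hc ⟨hac, hcb⟩
  constructor
  · rcases lt_trichotomy u u' with hlt | heq | hlt
    · exact (hl h h'.left_mem hlt (hux'.trans hxv)).elim
    · exact heq
    · exact (hl h' h.left_mem hlt (hux.trans hxv')).elim
  · rcases lt_trichotomy v v' with hlt | heq | hlt
    · exact (hl h' h.right_mem (hux'.trans hxv) hlt).elim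
    · exact heq
    · exact (hl h h'.right_mem (hux.trans hxv') hlt).elim

lemma IsGap.eq_of_mem_Ioo {O : Set α} {w y z x : α} (hw : IsGap O w y) (hz : IsGap O y z)
    (hx : x ∈ O) (hxI : x ∈ Ioo w z) : x = y := by
  rcases lt_trichotomy x y with hxy | hxy | hxy
  · exact (disjoint_right.mp hw.disjoint hx ⟨hxI.1, hxy⟩).elim
  · exact hxy
  · exact (disjoint_right.mp hz.disjoint hx ⟨hxy, hxI.2⟩).elim

variable (hG : ∀ g : G, StrictMono (g • · : α → α))

def smulOrderIsoHom : G →* α ≃o α where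
  toFun g := (MulAction.toPerm g).toOrderIso (hG g).monotone (hG g⁻¹).monotone
  map_one' := by ext x; exact one_smul G x
  map_mul' g h := by ext x; exact mul_smul g h x

include hG

@[simp] lemma smulOrderIsoHom_apply (g : G) (x : α) : smulOrderIsoHom hG g x = g • x := rfl

lemma smul_Ioo (g : G) (a b : α) : g • Ioo a b = Ioo (g • a) (g • b) :=
  (smulOrderIsoHom hG g).image_Ioo a b

lemma mem_fixedPoints_of_forall_smul_le {x : α} (h : ∀ g : G, g • x ≤ x) :
    x ∈ fixedPoints G α :=
  fun g => (h g).antisymm (by simpa using (hG g).monotone (h g⁻¹))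

lemma mem_fixedPoints_of_forall_le_smul {x : α} (h : ∀ g : G, x ≤ g • x) :
    x ∈ fixedPoints G α :=
  fun g => le_antisymm (by simpa using (hG g).monotone (h g⁻¹)) (h g)

lemma exists_lt_mem_orbit {y x : α} (hy : ∃ g : G, g • y ≠ y) (hx : x ∈ orbit G y) :
    ∃ z ∈ orbit G y, x < z := by
  by_contra! hmax
  have hfix := mem_fixedPoints_of_forall_smul_le hG fun g =>
    hmax _ (mem_orbit_of_mem_orbit g hx)
  obtain ⟨g, hg⟩ := hy
  rw [mem_fixedPoints'.mp hfix y (mem_orbit_symm.mp hx)] at hg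
  exact hg (hfix g)

lemma exists_mem_orbit_lt {y x : α} (hy : ∃ g : G, g • y ≠ y) (hx : x ∈ orbit G y) :
    ∃ z ∈ orbit G y, z < x := by
  by_contra! hmin
  have hfix := mem_fixedPoints_of_forall_le_smul hG fun g =>
    hmin _ (mem_orbit_of_mem_orbit g hx)
  obtain ⟨g, hg⟩ := hy
  rw [mem_fixedPoints'.mp hfix y (mem_orbit_symm.mp hx)] at hg
  exact hg (hfix g)

lemma IsGap.smul {y u v : α} (h : IsGap (orbit G y) u v) (g : G) :
    IsGap (orbit G y) (g • u) (g • v) := by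
  refine ⟨mem_orbit_of_mem_orbit g h.left_mem, mem_orbit_of_mem_orbit g h.right_mem,
    hG g h.lt, ?_⟩
  rw [← smul_Ioo hG, ← smul_orbit g y, disjoint_smul_set]
  exact h.disjoint

lemma IsGap.isBlock {y u v : α} (h : IsGap (orbit G y) u v) : IsBlock G (Ioo u v) := by
  rw [isBlock_iff_smul_eq_of_nonempty]
  intro g hg
  obtain ⟨hu, hv⟩ := (h.smul hG g).eq_of_not_disjoint h (by
    rwa [← smul_Ioo hG, not_disjoint_iff_nonempty_inter])
  rw [smul_Ioo hG, hu, hv]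

lemma IsGap.exists_smul_ne {y u v p : α} (h : IsGap (orbit G y) u v) (hp : p ∈ Ioo u v) :
    ∃ g : G, g • p ≠ p := by
  by_contra! hfix
  have hu : ∀ g : G, g • u ≤ u := fun g => not_lt.mp fun hgu =>
    disjoint_right.mp h.disjoint (mem_orbit_of_mem_orbit g h.left_mem)
      ⟨hgu, (lt_of_lt_of_eq (hG g hp.1) (hfix g)).trans hp.2⟩
  have hv : v ∈ orbit G u := orbit_eq_iff.mpr h.left_mem ▸ h.right_mem
  exact h.lt.ne' (mem_fixedPoints'.mp (mem_fixedPoints_of_forall_smul_le hG hu) v hv)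

lemma exists_isGap_left_right {y : α} (hy : ¬ DenselyOrdered (orbit G y)) :
    (∃ w, IsGap (orbit G y) w y) ∧ ∃ z, IsGap (orbit G y) y z := by
  obtain ⟨u, v, h⟩ := exists_isGap_of_not_denselyOrdered hy
  obtain ⟨k, rfl⟩ := h.left_mem
  obtain ⟨l, rfl⟩ := h.right_mem
  exact ⟨⟨_, by simpa using h.smul hG l⁻¹⟩, _, by simpa using h.smul hG k⁻¹⟩

end OrderedAction

section RatExtension

noncomputable def ratExtend (f : ℚ ≃o ℚ) (x : ℝ) : ℝ :=
  sSup ((fun q : ℚ => (f q : ℝ)) '' {q | (q : ℝ) < x})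

variable (f : ℚ ≃o ℚ)

lemma cast_le_ratExtend {q : ℚ} {x : ℝ} (hq : (q : ℝ) < x) : (f q : ℝ) ≤ ratExtend f x := by
  refine le_csSup ?_ ⟨q, hq, rfl⟩
  obtain ⟨r, hr⟩ := exists_rat_gt x
  refine ⟨f r, ?_⟩
  rintro _ ⟨q', hq', rfl⟩
  exact Rat.cast_le.mpr (f.monotone (Rat.cast_le.mp (hq'.trans hr).le))

lemma ratExtend_le {x y : ℝ} (h : ∀ q : ℚ, (q : ℝ) < x → (f q : ℝ) ≤ y) :
    ratExtend f x ≤ y := by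
  obtain ⟨q, hq⟩ := exists_rat_lt x
  exact csSup_le ⟨f q, q, hq, rfl⟩ (by rintro _ ⟨q, hq, rfl⟩; exact h q hq)

lemma ratExtend_eq {x y : ℝ} (h₁ : ∀ q : ℚ, (q : ℝ) < x → (f q : ℝ) ≤ y)
    (h₂ : ∀ q : ℚ, x ≤ q → y ≤ f q) : ratExtend f x = y := by
  refine (ratExtend_le f h₁).antisymm (not_lt.mp fun hlt => ?_)
  obtain ⟨m, hm₁, hm₂⟩ := exists_rat_btwn hlt
  rcases lt_or_ge ((f.symm m : ℚ) : ℝ) x with hx | hx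
  · have := cast_le_ratExtend f hx
    rw [f.apply_symm_apply] at this
    exact hm₁.not_ge this
  · have := h₂ _ hx
    rw [f.apply_symm_apply] at this
    exact hm₂.not_ge this

lemma ratExtend_cast (q : ℚ) : ratExtend f q = f q :=
  ratExtend_eq f (fun _ h => by exact_mod_cast f.monotone (by exact_mod_cast h.le))
    fun _ h => by exact_mod_cast f.monotone (by exact_mod_cast h)

lemma ratExtend_mono : Monotone (ratExtend f) :=
  fun _ _ hxy => ratExtend_le f fun _ hq => cast_le_ratExtend f (hq.trans_le hxy)

lemma eq_ratExtend {F : ℝ → ℝ} (hF : Monotone F) (hFq : ∀ q : ℚ, F q = f q) :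
    F = ratExtend f :=
  funext fun _ =>
    (ratExtend_eq f (fun q hq => hFq q ▸ hF hq.le) fun q hq => hFq q ▸ hF hq).symm

lemma ratExtend_one (x : ℝ) : ratExtend 1 x = x :=
  (congrFun (eq_ratExtend 1 monotone_id fun _ => rfl) x).symm

lemma ratExtend_mul (g : ℚ ≃o ℚ) (x : ℝ) :
    ratExtend (f * g) x = ratExtend f (ratExtend g x) :=
  (congrFun (eq_ratExtend (f * g) ((ratExtend_mono f).comp (ratExtend_mono g))
    fun q => by simp [ratExtend_cast]) x).symm

noncomputable def ratExtendHom : (ℚ ≃o ℚ) →* (ℝ ≃o ℝ) where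
  toFun f := Equiv.toOrderIso
    { toFun := ratExtend f
      invFun := ratExtend f⁻¹
      left_inv x := by rw [← ratExtend_mul, inv_mul_cancel, ratExtend_one]
      right_inv x := by rw [← ratExtend_mul, mul_inv_cancel, ratExtend_one] }
    (ratExtend_mono f) (ratExtend_mono f⁻¹)
  map_one' := by ext x; exact ratExtend_one x
  map_mul' f g := by ext x; exact ratExtend_mul f g x

@[simp] lemma ratExtendHom_apply_cast (q : ℚ) : ratExtendHom f q = f q := ratExtend_cast f q

end RatExtension

def OrderIso.conjHom {α β : Type*} [Preorder α] [Preorder β] (e : α ≃o β) :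
    (α ≃o α) →* (β ≃o β) where
  toFun f := (e.symm.trans f).trans e
  map_one' := by ext; simp
  map_mul' f g := by ext; simp

theorem exists_denseOrbit_of_denselyOrdered_orbit {G α : Type*} [Group G] [Countable G]
    [LinearOrder α] [MulAction G α] (hG : ∀ g : G, StrictMono (g • · : α → α)) {y : α}
    (hy : ∃ g : G, g • y ≠ y) [DenselyOrdered (orbit G y)] :
    ∃ φ : G →* Equiv.Perm ℝ, (∀ g : G, StrictMono (φ g)) ∧
      ∃ x : ℝ, Dense {z : ℝ | ∃ g : G, z = φ g x} := by
  have : Countable (orbit G y) := (countable_range _).to_subtype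
  have : NoMaxOrder (orbit G y) := ⟨fun x =>
    let ⟨z, hz, hxz⟩ := exists_lt_mem_orbit hG hy x.2; ⟨⟨z, hz⟩, hxz⟩⟩
  have : NoMinOrder (orbit G y) := ⟨fun x =>
    let ⟨z, hz, hzx⟩ := exists_mem_orbit_lt hG hy x.2; ⟨⟨z, hz⟩, hzx⟩⟩
  have : Nonempty (orbit G y) := ⟨⟨y, mem_orbit_self y⟩⟩
  obtain ⟨e⟩ := Order.iso_of_countable_dense (orbit G y) ℚ
  have hG' : ∀ g : G, StrictMono (g • · : orbit G y → orbit G y) := fun g _ _ h => hG g h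
  let ψ : G →* ℝ ≃o ℝ := ratExtendHom.comp (e.conjHom.comp (smulOrderIsoHom hG'))
  refine ⟨(toPermHom (ℝ ≃o ℝ) ℝ).comp ψ, fun g => (ψ g).strictMono,
    e ⟨y, mem_orbit_self y⟩, Rat.denseRange_cast.mono ?_⟩
  rintro _ ⟨q, rfl⟩
  obtain ⟨g, hg⟩ := (e.symm q).2
  refine ⟨g, ?_⟩
  have : g • (⟨y, mem_orbit_self y⟩ : orbit G y) = e.symm q := Subtype.ext hg
  simp [ψ, OrderIso.conjHom, this]

section Blocks

variable {G X : Type*} [Group G] [MulAction G X]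

lemma orbit_stabilizer_subset {S : Set X} {y : X} (hy : y ∈ S) :
    orbit (stabilizer G S) y ⊆ S := by
  rintro _ ⟨g, rfl⟩
  exact (mem_stabilizer_iff.mp g.2).subset (smul_mem_smul_set hy)

lemma MulAction.IsBlock.of_isBlock_stabilizer {S T : Set X} (hS : IsBlock G S) (hTS : T ⊆ S)
    (hT : IsBlock (stabilizer G S) T) : IsBlock G T := by
  rw [isBlock_iff_smul_eq_of_nonempty] at hT ⊢
  intro g hg
  exact hT (g := ⟨g, hS.smul_eq_of_nonempty
    (hg.mono (inter_subset_inter (smul_set_mono hTS) hTS))⟩) hg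

lemma MulAction.IsBlock.interior [TopologicalSpace X] [ContinuousConstSMul G X] {B : Set X}
    (hB : IsBlock G B) : IsBlock G (interior B) := by
  rw [isBlock_iff_smul_eq_of_nonempty]
  intro g hg
  rw [← interior_smul, hB.smul_eq_of_nonempty
    (hg.mono (inter_subset_inter (smul_set_mono interior_subset) interior_subset))]

end Blocks

section CompactChain

variable {X : Type*} [TopologicalSpace X] {𝒮 : Set (Set X)}

lemma IsChain.directed_closure (h𝒮 : IsChain (· ⊆ ·) 𝒮) :
    Directed (· ⊇ ·) fun S : {S // S ∈ 𝒮 ∧ IsCompact (closure S)} => closure S.1 := by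
  intro S T
  rcases h𝒮.total S.2.1 T.2.1 with h | h
  · exact ⟨S, subset_rfl, closure_mono h⟩
  · exact ⟨T, closure_mono h, subset_rfl⟩

lemma iInter_closure_eq_sInter
    (hcpt : ∀ S ∈ 𝒮, ∃ T ∈ 𝒮, IsCompact (closure T) ∧ closure T ⊆ S) :
    ⋂ S : {S // S ∈ 𝒮 ∧ IsCompact (closure S)}, closure S.1 = ⋂₀ 𝒮 := by
  refine subset_antisymm (fun x hx S hS => ?_) fun x hx => mem_iInter.mpr fun S =>
    subset_closure (hx S S.2.1)
  obtain ⟨T, hT, hTc, hTS⟩ := hcpt S hS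
  exact hTS (mem_iInter.mp hx ⟨T, hT, hTc⟩)

lemma IsChain.sInter_nonempty (h𝒮 : IsChain (· ⊆ ·) 𝒮) (hne : 𝒮.Nonempty)
    (hcpt : ∀ S ∈ 𝒮, ∃ T ∈ 𝒮, IsCompact (closure T) ∧ closure T ⊆ S)
    (hne' : ∀ S ∈ 𝒮, S.Nonempty) : (⋂₀ 𝒮).Nonempty := by
  obtain ⟨S, hS⟩ := hne
  obtain ⟨T, hT, hTc, -⟩ := hcpt S hS
  have : Nonempty {S // S ∈ 𝒮 ∧ IsCompact (closure S)} := ⟨⟨T, hT, hTc⟩⟩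
  rw [← iInter_closure_eq_sInter hcpt]
  exact IsCompact.nonempty_iInter_of_directed_nonempty_isCompact_isClosed _
    h𝒮.directed_closure (fun S => (hne' S S.2.1).closure) (fun S => S.2.2)
    fun _ => isClosed_closure

lemma IsChain.exists_subset_of_sInter_subset (h𝒮 : IsChain (· ⊆ ·) 𝒮) (hne : 𝒮.Nonempty)
    (hcpt : ∀ S ∈ 𝒮, ∃ T ∈ 𝒮, IsCompact (closure T) ∧ closure T ⊆ S) {U : Set X}
    (hU : IsOpen U) (h : ⋂₀ 𝒮 ⊆ U) : ∃ S ∈ 𝒮, S ⊆ U := by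
  obtain ⟨S, hS⟩ := hne
  obtain ⟨T, hT, hTc, -⟩ := hcpt S hS
  have : Nonempty {S // S ∈ 𝒮 ∧ IsCompact (closure S)} := ⟨⟨T, hT, hTc⟩⟩
  obtain ⟨S, hSU⟩ := exists_subset_nhds_of_isCompact' h𝒮.directed_closure (fun S => S.2.2)
    (fun _ => isClosed_closure) fun x hx =>
      hU.mem_nhds (h (iInter_closure_eq_sInter hcpt ▸ hx))
  exact ⟨S.1, S.2.1, subset_closure.trans hSU⟩

end CompactChain

section TransfiniteIteration

universe u

variable {β : Type u}

noncomputable def transfiniteIter (b₀ : β) (next : β → β) (lb : Set β → β) (o : Ordinal.{u}) :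
    β :=
  Ordinal.limitRecOn o b₀ (fun _ b => next b) fun o _ F =>
    lb {b | ∃ o', ∃ h : o' < o, F o' h = b}

section

variable (b₀ : β) (next : β → β) (lb : Set β → β)

lemma transfiniteIter_zero : transfiniteIter b₀ next lb 0 = b₀ := by
  rw [transfiniteIter, Ordinal.limitRecOn_zero]

lemma transfiniteIter_add_one (o : Ordinal.{u}) :
    transfiniteIter b₀ next lb (o + 1) = next (transfiniteIter b₀ next lb o) := by
  rw [transfiniteIter, Ordinal.limitRecOn_add_one, transfiniteIter]

lemma transfiniteIter_limit {o : Ordinal.{u}} (ho : Order.IsSuccLimit o) :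
    transfiniteIter b₀ next lb o = lb (transfiniteIter b₀ next lb '' Iio o) := by
  rw [transfiniteIter, Ordinal.limitRecOn_limit _ _ _ _ ho]
  congr 1
  ext
  simp [transfiniteIter]

end

/-- A Bourbaki–Witt type principle: otherwise `transfiniteIter` would inject the ordinals
into `β`. -/
theorem exists_not_next_lt [PartialOrder β] (next : β → β) (P : β → Prop) {b₀ : β} (hb₀ : P b₀)
    (hnext : ∀ b, P b → P (next b))
    (hlim : ∀ C : Set β, IsChain (· ≤ ·) C → C.Nonempty → (∀ c ∈ C, P c) →
      (∀ c ∈ C, next c ∈ C) → ∃ b, P b ∧ b ∈ lowerBounds C) :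
    ∃ b, P b ∧ ¬ next b < b := by
  by_contra! hlt
  have : Nonempty β := ⟨b₀⟩
  choose! lb hlb using hlim
  set f := transfiniteIter b₀ next lb
  have key : ∀ o, P (f o) ∧ ∀ o' < o, f o < f o' := by
    intro o
    induction o using Ordinal.limitRecOn with
    | zero =>
      exact ⟨by simpa [f, transfiniteIter_zero] using hb₀, fun o' h => (not_lt_bot h).elim⟩
    | add_one o ih =>
      rw [show f (o + 1) = next (f o) from transfiniteIter_add_one ..]
      refine ⟨hnext _ ih.1, fun o' ho' => (hlt _ ih.1).trans_le ?_⟩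
      rcases (Order.lt_add_one_iff.mp ho').eq_or_lt with rfl | ho'
      · exact le_rfl
      · exact (ih.2 o' ho').le
    | limit o ho ih =>
      have anti : ∀ a b, a ≤ b → b < o → f b ≤ f a := fun a b hab hb =>
        hab.eq_or_lt.elim (fun h => h ▸ le_rfl) fun h => ((ih b hb).2 a h).le
      have hC : IsChain (· ≤ ·) (f '' Iio o) := by
        rintro _ ⟨a, ha, rfl⟩ _ ⟨b, hb, rfl⟩ -
        rcases le_total a b with hab | hab
        · exact Or.inr (anti a b hab hb)
        · exact Or.inl (anti b a hab ha)
      obtain ⟨hP, hlow⟩ := hlb _ hC ⟨f 0, 0, ho.bot_lt, rfl⟩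
        (by rintro _ ⟨a, ha, rfl⟩; exact (ih a ha).1)
        (by rintro _ ⟨a, ha, rfl⟩; exact ⟨a + 1, ho.add_one_lt ha, transfiniteIter_add_one ..⟩)
      rw [show f o = lb (f '' Iio o) from transfiniteIter_limit _ _ _ ho]
      refine ⟨hP, fun a ha => (hlow ⟨a + 1, ho.add_one_lt ha, rfl⟩).trans_lt ?_⟩
      rw [show f (a + 1) = next (f a) from transfiniteIter_add_one ..]
      exact hlt _ (ih a ha).1
  exact not_injective_of_ordinal f (StrictAnti.injective fun a b hab => (key b).2 a hab)

end TransfiniteIteration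

section IntervalBlocks

variable (G : Type*) [Group G] [MulAction G ℝ]

structure IsIntervalBlock (S : Set ℝ) : Prop where
  isOpen : IsOpen S
  ordConnected : S.OrdConnected
  nonempty : S.Nonempty
  isBlock : IsBlock G S

structure IsRefinement (S T : Set ℝ) : Prop where
  isIntervalBlock : IsIntervalBlock G T
  isCompact_closure : IsCompact (closure T)
  closure_subset : closure T ⊆ S
  not_subset : ¬ S ⊆ T
  exists_smul_ne : ∀ p ∈ T, ∃ g ∈ stabilizer G S, g • p ≠ p

variable {G}

lemma isIntervalBlock_univ : IsIntervalBlock G univ :=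
  ⟨isOpen_univ, ordConnected_univ, univ_nonempty, .univ⟩

lemma IsRefinement.ssubset {S T : Set ℝ} (h : IsRefinement G S T) : T ⊂ S :=
  ⟨subset_closure.trans h.closure_subset, h.not_subset⟩

variable (hG : ∀ g : G, StrictMono (g • · : ℝ → ℝ))
  (hnw : ∀ a b : ℝ, a < b →
    ∃ g : G, (∃ x ∈ Ioo a b, g • x ≠ x) ∧ (g • Ioo a b ∩ Ioo a b).Nonempty)
  (hgap : ∀ y : ℝ, (∃ g : G, g • y ≠ y) → ¬ DenselyOrdered (orbit G y))

include hnw in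
lemma IsIntervalBlock.exists_smul_ne {S : Set ℝ} (hS : IsIntervalBlock G S) :
    ∃ y ∈ S, ∃ g ∈ stabilizer G S, g • y ≠ y := by
  obtain ⟨a, b, hab, hsub⟩ := hS.isOpen.exists_Ioo_subset hS.nonempty
  obtain ⟨g, ⟨x, hx, hgx⟩, hmeet⟩ := hnw a b hab
  exact ⟨x, hsub hx, g, hS.isBlock.smul_eq_of_nonempty
    (hmeet.mono (inter_subset_inter (smul_set_mono hsub) hsub)), hgx⟩

include hG hnw hgap in
lemma IsIntervalBlock.exists_isGap {S : Set ℝ} (hS : IsIntervalBlock G S) :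
    ∃ y ∈ S, ∃ z, IsGap (orbit (stabilizer G S) y) y z := by
  obtain ⟨y, hyS, h, hhS, hhy⟩ := hS.exists_smul_ne hnw
  obtain ⟨z, hz⟩ := (exists_isGap_left_right hG (hgap y ⟨h, hhy⟩)).2
  obtain ⟨k, rfl⟩ := hz.right_mem
  have hk : k ∈ stabilizer G S := by
    by_contra hk
    obtain ⟨w, hw, hyw⟩ :=
      exists_lt_mem_orbit (fun g : stabilizer G S => hG g) ⟨⟨h, hhS⟩, hhy⟩ (mem_orbit_self y)
    have hkw : k • y ≤ w := not_lt.mp fun hwk =>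
      disjoint_right.mp hz.disjoint (orbit_subgroup_subset _ _ hw) ⟨hyw, hwk⟩
    exact disjoint_left.mp (hS.isBlock.disjoint_smul_of_ne (mt mem_stabilizer_iff.mpr hk))
      (smul_mem_smul_set hyS)
      (hS.ordConnected.out hyS (orbit_stabilizer_subset hyS hw) ⟨hz.lt.le, hkw⟩)
  exact ⟨y, hyS, k • y,
    hz.mono (orbit_subgroup_subset _ _) (mem_orbit_self y) ⟨⟨k, hk⟩, rfl⟩⟩

include hG in
lemma IsIntervalBlock.isRefinement_Ioo {S : Set ℝ} (hS : IsIntervalBlock G S) {y u v : ℝ}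
    (hy : y ∈ S) (h : IsGap (orbit (stabilizer G S) y) u v) : IsRefinement G S (Ioo u v) := by
  have hu := orbit_stabilizer_subset hy h.left_mem
  have huv : Icc u v ⊆ S := hS.ordConnected.out hu (orbit_stabilizer_subset hy h.right_mem)
  have hclosure : closure (Ioo u v) = Icc u v := closure_Ioo h.lt.ne
  refine ⟨⟨isOpen_Ioo, ordConnected_Ioo, nonempty_Ioo.mpr h.lt,
    hS.isBlock.of_isBlock_stabilizer (Ioo_subset_Icc_self.trans huv)
      (h.isBlock fun g : stabilizer G S => hG g)⟩,
    hclosure ▸ isCompact_Icc, hclosure ▸ huv,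
    fun hsub => (hsub hu).1.false, fun p hp => ?_⟩
  obtain ⟨g, hg⟩ := h.exists_smul_ne (fun g : stabilizer G S => hG g) hp
  exact ⟨g, g.2, hg⟩

end IntervalBlocks

lemma Set.OrdConnected.subsingleton_of_interior_eq_empty {α : Type*} [LinearOrder α]
    [TopologicalSpace α] [OrderTopology α] [DenselyOrdered α] {s : Set α} (hs : s.OrdConnected)
    (h : interior s = ∅) : s.Subsingleton := by
  intro a ha b hb
  by_contra hab
  wlog hlt : a < b generalizing a b
  · exact this hb ha (Ne.symm hab) ((Ne.symm hab).lt_of_le (not_lt.mp hlt))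
  exact (nonempty_Ioo.mpr hlt).ne_empty (subset_empty_iff.mp
    (h ▸ interior_maximal (Ioo_subset_Icc_self.trans (hs.out ha hb)) isOpen_Ioo))

section Limit

variable {G : Type*} [Group G] [MulAction G ℝ] (hG : ∀ g : G, StrictMono (g • · : ℝ → ℝ))
  (hgap : ∀ y : ℝ, (∃ g : G, g • y ≠ y) → ¬ DenselyOrdered (orbit G y))
  {𝒮 : Set (Set ℝ)} (h𝒮 : IsChain (· ⊆ ·) 𝒮) (hne : 𝒮.Nonempty)
  (hblock : ∀ S ∈ 𝒮, IsIntervalBlock G S) (href : ∀ S ∈ 𝒮, ∃ T ∈ 𝒮, IsRefinement G S T)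

include hG hgap h𝒮 hne hblock href

lemma interior_sInter_nonempty : (interior (⋂₀ 𝒮)).Nonempty := by
  have hcpt : ∀ S ∈ 𝒮, ∃ T ∈ 𝒮, IsCompact (closure T) ∧ closure T ⊆ S := fun S hS =>
    let ⟨T, hT, hST⟩ := href S hS; ⟨T, hT, hST.isCompact_closure, hST.closure_subset⟩
  obtain ⟨p, hp⟩ := h𝒮.sInter_nonempty hne hcpt fun S hS => (hblock S hS).nonempty
  by_contra hempty
  have hD : ⋂₀ 𝒮 ⊆ {p} := fun q hq =>
    (ordConnected_sInter fun S hS => (hblock S hS).ordConnected)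
      |>.subsingleton_of_interior_eq_empty (not_nonempty_iff_eq_empty.mp hempty) hq hp
  have hmove : ∀ S ∈ 𝒮, ∃ g : G, g • p ≠ p ∧ g • p ∈ S := fun S hS => by
    obtain ⟨T, hT, hST⟩ := href S hS
    obtain ⟨g, hgS, hgp⟩ := hST.exists_smul_ne p (hp T hT)
    exact ⟨g, hgp, (mem_stabilizer_iff.mp hgS).subset (smul_mem_smul_set (hp S hS))⟩
  obtain ⟨S₀, hS₀⟩ := hne
  obtain ⟨g₀, hg₀, -⟩ := hmove S₀ hS₀
  obtain ⟨⟨w, hw⟩, z, hz⟩ := exists_isGap_left_right hG (hgap p ⟨g₀, hg₀⟩)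
  obtain ⟨S, hS, hSwz⟩ := h𝒮.exists_subset_of_sInter_subset ⟨S₀, hS₀⟩ hcpt isOpen_Ioo
    (hD.trans (singleton_subset_iff.mpr ⟨hw.lt, hz.lt⟩))
  obtain ⟨g, hgp, hgS⟩ := hmove S hS
  exact hgp (hw.eq_of_mem_Ioo hz (mem_orbit p g) (hSwz hgS))

lemma isIntervalBlock_interior_sInter : IsIntervalBlock G (interior (⋂₀ 𝒮)) := by
  have : ContinuousConstSMul G ℝ := ⟨fun g => (smulOrderIsoHom hG g).toHomeomorph.continuous⟩
  refine ⟨isOpen_interior,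
    (ordConnected_sInter fun S hS => (hblock S hS).ordConnected).interior,
    interior_sInter_nonempty hG hgap h𝒮 hne hblock href, ?_⟩
  rw [sInter_eq_biInter]
  exact (IsBlock.iInter fun S => IsBlock.iInter fun hS => (hblock S hS).isBlock).interior

end Limit

theorem exists_denselyOrdered_orbit {G : Type*} [Group G] [MulAction G ℝ]
    (hG : ∀ g : G, StrictMono (g • · : ℝ → ℝ))
    (hnw : ∀ a b : ℝ, a < b →
      ∃ g : G, (∃ x ∈ Ioo a b, g • x ≠ x) ∧ (g • Ioo a b ∩ Ioo a b).Nonempty) :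
    ∃ y : ℝ, (∃ g : G, g • y ≠ y) ∧ DenselyOrdered (orbit G y) := by
  by_contra! hgap
  have hstep : ∀ S, IsIntervalBlock G S → ∃ T, IsRefinement G S T := fun S hS =>
    let ⟨y, hy, z, hz⟩ := hS.exists_isGap hG hnw hgap
    ⟨_, hS.isRefinement_Ioo hG hy hz⟩
  choose! next hnext using hstep
  obtain ⟨S, hS, hSnext⟩ := exists_not_next_lt next (IsIntervalBlock G) isIntervalBlock_univ
    (fun S hS => (hnext S hS).isIntervalBlock) fun C hC hne hCP hCnext =>
      ⟨_, isIntervalBlock_interior_sInter hG hgap hC hne hCP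
        (fun S hS => ⟨next S, hCnext S hS, hnext S (hCP S hS)⟩),
        fun S hS => interior_subset.trans (sInter_subset_of_mem hS)⟩
  exact hSnext (hnext S hS).ssubset

/-- Dichotomy theorem of Shi–Zhou: a countable group `G` either admits a topologically
transitive action on `ℝ` by orientation-preserving homeomorphisms, or every action of
`G` on `ℝ` by orientation-preserving homeomorphisms has a wandering interval `(a, b)`:
each group element either restricts to the identity on `(a, b)` or moves `(a, b)`
entirely off itself. -/
theorem shi_zhou_dichotomy (G : Type) [Group G] [Countable G] :
    (∃ φ : G →* Equiv.Perm ℝ, (∀ g : G, StrictMono (φ g)) ∧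
      ∃ x : ℝ, Dense {y : ℝ | ∃ g : G, y = φ g x}) ∨
    (∀ φ : G →* Equiv.Perm ℝ, (∀ g : G, StrictMono (φ g)) →
      ∃ a b : ℝ, a < b ∧ ∀ g : G,
        (∀ x ∈ Set.Ioo a b, φ g x = x) ∨
        (φ g '' Set.Ioo a b) ∩ Set.Ioo a b = ∅) := by
  refine or_iff_not_imp_right.mpr fun h => ?_
  push Not at h
  obtain ⟨φ, hφ, hnw⟩ := h
  let : MulAction G ℝ := MulAction.compHom ℝ φ
  obtain ⟨y, hy, hdense⟩ := exists_denselyOrdered_orbit hφ hnw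
  exact exists_denseOrbit_of_denselyOrdered_orbit hφ hy
end
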